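/- arXiv:2006.15614 — 2 statements merged into one kernel-verified Lean document; each statement's English description precedes it below -/
import Mathlib

section
/- Let L be a list assignment on a path P with vertices v₁,…,vₙ where n is odd and |L(vᵢ)| = 4m for all i. Define Λ = ∩ᵢ L(vᵢ), X̂₁ = {c ∈ L(v₁) \ Λ : the smallest i with c ∉ L(vᵢ) is even}, and X̂ₙ = {c ∈ L(vₙ) \ Λ : the largest i with c ∉ L(vᵢ) is even}. Then S_L(P) ≥ max(2(n−1)m + |X̂₁| + |X̂ₙ| + |Λ|, 2(n+1)m), where S_L(P) = Σᵢ |Xᵢ| with X₁ = L(v₁) and Xᵢ = L(vᵢ) \ Xᵢ₋₁. -/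
open Classical

/-- The greedy sets: `X₁ = L(v₁)`, `Xᵢ = L(vᵢ) \ Xᵢ₋₁` (vertices indexed `1,…,n`). -/
def Xs (L : ℕ → Finset ℕ) : ℕ → Finset ℕ
  | 0 => ∅
  | i + 1 => L (i + 1) \ Xs L i

/-- `S_L(P) = Σ_{i=1}^n |Xᵢ|`. -/
def SL (L : ℕ → Finset ℕ) (n : ℕ) : ℕ := ∑ i ∈ Finset.Icc 1 n, (Xs L i).card

/-- `Λ = ∩_{i=1}^n L(vᵢ)`. -/
noncomputable def lam (L : ℕ → Finset ℕ) (n : ℕ) : Finset ℕ :=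
  (L 1).filter (fun c => ∀ i ∈ Finset.Icc 1 n, c ∈ L i)

/-- `X̂₁`: colours of `L(v₁) \ Λ` whose smallest index of absence is even. -/
noncomputable def hatX1 (L : ℕ → Finset ℕ) (n : ℕ) : Finset ℕ :=
  (L 1 \ lam L n).filter (fun c =>
    ∃ i ∈ Finset.Icc 1 n, c ∉ L i ∧ Even i ∧ ∀ j ∈ Finset.Icc 1 n, j < i → c ∈ L j)

/-- `X̂ₙ`: colours of `L(vₙ) \ Λ` whose largest index of absence is even. -/
noncomputable def hatXn (L : ℕ → Finset ℕ) (n : ℕ) : Finset ℕ :=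
  (L n \ lam L n).filter (fun c =>
    ∃ i ∈ Finset.Icc 1 n, c ∉ L i ∧ Even i ∧ ∀ j ∈ Finset.Icc 1 n, i < j → c ∈ L j)


/-! Along a stretch of lists that all contain a colour `c`, membership of `c` in the greedy
sets `Xᵢ` alternates. Hence `Λ` and `X̂ₙ` lie in `Xₙ`, and a colour of `X̂₁` first missing from
`L(v₂ⱼ)` lies in `X₂ⱼ₋₁`. As `L(vᵢ₊₁) ⊆ Xᵢ ∪ Xᵢ₊₁`, every pair `|Xᵢ| + |Xᵢ₊₁|` is at least
`4m`, and for `i = 2j - 1` at least `4m` plus the number of colours of `X̂₁` first missing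
from `L(v₂ⱼ)`. Summing over the pairs `(1,2), …, (n-2,n-1)` and adding `|Xₙ|`, respectively
adding `|X₁|` to the sum over `(2,3), …, (n-1,n)`, gives the two bounds. -/

section Greedy

variable {L : ℕ → Finset ℕ}

lemma mem_Xs_succ {i c : ℕ} : c ∈ Xs L (i + 1) ↔ c ∈ L (i + 1) ∧ c ∉ Xs L i := by
  simp [Xs]

lemma Xs_subset {i : ℕ} (hi : 1 ≤ i) : Xs L i ⊆ L i := by
  obtain ⟨j, rfl⟩ := Nat.exists_eq_add_of_le' hi
  exact Finset.sdiff_subset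

lemma SL_succ (n : ℕ) : SL L (n + 1) = SL L n + (Xs L (n + 1)).card :=
  Finset.sum_Icc_succ_top (by omega) _

lemma mem_Xs_add_iff {a t c : ℕ} (h : ∀ j, a < j → j ≤ a + t → c ∈ L j) :
    c ∈ Xs L (a + t) ↔ (c ∈ Xs L a ↔ Even t) := by
  induction t with
  | zero => simp
  | succ t ih =>
    have hc : c ∈ L (a + t + 1) := h _ (by omega) (by omega)
    rw [← add_assoc, mem_Xs_succ, ih fun j hj hj' => h j hj (by omega), Nat.even_add_one]
    tauto

lemma mem_Xs_add_of_odd {a t c : ℕ} (h0 : c ∉ Xs L a) (ht : Odd t)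
    (h : ∀ j, a < j → j ≤ a + t → c ∈ L j) : c ∈ Xs L (a + t) := by
  simp [mem_Xs_add_iff h, h0, Nat.not_even_iff_odd.2 ht]

lemma mem_Xs_of_odd {i c : ℕ} (hi : Odd i) (h : ∀ j, 1 ≤ j → j ≤ i → c ∈ L j) :
    c ∈ Xs L i := by
  simpa using mem_Xs_add_of_odd (a := 0) (by simp [Xs]) hi fun j hj hj' => h j hj (by omega)

lemma card_add_card_le_card_Xs_add {i : ℕ} {B : Finset ℕ} (hB : B ⊆ Xs L i)
    (hdisj : Disjoint (L (i + 1)) B) :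
    (L (i + 1)).card + B.card ≤ (Xs L i).card + (Xs L (i + 1)).card := by
  have hL : L (i + 1) ⊆ Xs L i ∪ Xs L (i + 1) := by
    intro c hc
    rw [Finset.mem_union, mem_Xs_succ]
    tauto
  calc (L (i + 1)).card + B.card = (L (i + 1) ∪ B).card :=
        (Finset.card_union_of_disjoint hdisj).symm
    _ ≤ (Xs L i ∪ Xs L (i + 1)).card :=
        Finset.card_le_card (Finset.union_subset hL (hB.trans Finset.subset_union_left))
    _ ≤ (Xs L i).card + (Xs L (i + 1)).card := Finset.card_union_le _ _

lemma mul_succ_le_SL {m p : ℕ} (hcard : ∀ i, 1 ≤ i → i ≤ 2 * p + 1 → (L i).card = 4 * m) :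
    4 * m * (p + 1) ≤ SL L (2 * p + 1) := by
  induction p with
  | zero => simpa [SL, Xs] using (hcard 1 le_rfl le_rfl).ge
  | succ p ih =>
    have ih := ih fun i hi hi' => hcard i hi (by omega)
    have hpair := card_add_card_le_card_Xs_add (L := L) (i := 2 * p + 1 + 1) (B := ∅)
      (Finset.empty_subset _) (Finset.disjoint_empty_right _)
    rw [hcard _ (by omega) (by omega), Finset.card_empty] at hpair
    rw [show 2 * (p + 1) + 1 = 2 * p + 1 + 1 + 1 by ring, SL_succ, SL_succ]
    linarith

def MissingUpTo (L : ℕ → Finset ℕ) (i c : ℕ) : Prop := ∃ j, 1 ≤ j ∧ j ≤ i ∧ c ∉ L j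

lemma missingUpTo_two_mul_add_two {c p : ℕ}
    (hc : ∀ i, Odd i → c ∉ L i → ∃ j, 1 ≤ j ∧ j < i ∧ c ∉ L j)
    (h : MissingUpTo L (2 * p + 1 + 1) c) :
    MissingUpTo L (2 * p) c ∨ c ∉ L (2 * p + 1 + 1) ∧ ∀ j, 1 ≤ j → j ≤ 2 * p + 1 → c ∈ L j := by
  obtain ⟨i, hi1, hi2, hci⟩ := h
  by_cases hprev : MissingUpTo L (2 * p) c
  · exact Or.inl hprev
  simp only [MissingUpTo, not_exists, not_and, not_not] at hprev
  have hodd : c ∈ L (2 * p + 1) := by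
    by_contra hc'
    obtain ⟨j, hj1, hj2, hcj⟩ := hc _ (odd_two_mul_add_one p) hc'
    exact hcj (hprev j hj1 (by omega))
  have hpres : ∀ j, 1 ≤ j → j ≤ 2 * p + 1 → c ∈ L j := fun j hj1 hj2 => by
    rcases (show j ≤ 2 * p ∨ j = 2 * p + 1 by omega) with hj | rfl
    exacts [hprev j hj1 hj, hodd]
  obtain rfl : i = 2 * p + 1 + 1 := by
    by_contra hne
    exact hci (hpres i hi1 (by omega))
  exact Or.inr ⟨hci, hpres⟩

lemma mul_add_card_le_SL {m p : ℕ} (A : Finset ℕ)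
    (hA : ∀ c ∈ A, ∀ i, Odd i → c ∉ L i → ∃ j, 1 ≤ j ∧ j < i ∧ c ∉ L j)
    (hcard : ∀ i, 1 ≤ i → i ≤ 2 * p → (L i).card = 4 * m) :
    4 * m * p + (A.filter (MissingUpTo L (2 * p))).card ≤ SL L (2 * p) := by
  induction p with
  | zero => simp [SL, MissingUpTo]
  | succ p ih =>
    have ih := ih fun i hi hi' => hcard i hi (by omega)
    set B := A.filter fun c => c ∉ L (2 * p + 1 + 1) ∧ ∀ j, 1 ≤ j → j ≤ 2 * p + 1 → c ∈ L j
    have hB : B ⊆ Xs L (2 * p + 1) := fun c hc => by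
      simp only [B, Finset.mem_filter] at hc
      exact mem_Xs_of_odd (odd_two_mul_add_one p) hc.2.2
    have hdisj : Disjoint (L (2 * p + 1 + 1)) B := Finset.disjoint_right.2 fun c hc => by
      simp only [B, Finset.mem_filter] at hc
      exact hc.2.1
    have hpair := card_add_card_le_card_Xs_add hB hdisj
    rw [hcard _ (by omega) (by omega)] at hpair
    have hsplit : A.filter (MissingUpTo L (2 * p + 1 + 1)) ⊆
        A.filter (MissingUpTo L (2 * p)) ∪ B := by
      intro c hc
      simp only [Finset.mem_filter, Finset.mem_union, B] at hc ⊢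
      rcases missingUpTo_two_mul_add_two (hA c hc.1) hc.2 with h | h
      exacts [Or.inl ⟨hc.1, h⟩, Or.inr ⟨hc.1, h⟩]
    have hcardsplit := (Finset.card_le_card hsplit).trans (Finset.card_union_le _ _)
    rw [show 2 * (p + 1) = 2 * p + 1 + 1 by ring, SL_succ, SL_succ]
    linarith

end Greedy

lemma hatX1_exists_missing_before_odd {L : ℕ → Finset ℕ} {n : ℕ} :
    ∀ c ∈ hatX1 L n, ∀ i, Odd i → c ∉ L i → ∃ j, 1 ≤ j ∧ j < i ∧ c ∉ L j := by
  intro c hc i hi hci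
  simp only [hatX1, Finset.mem_filter, Finset.mem_Icc] at hc
  obtain ⟨-, i₀, ⟨hi₀, hi₀n⟩, hci₀, heven, hfirst⟩ := hc
  refine ⟨i₀, hi₀, ?_, hci₀⟩
  by_contra! hle
  rcases hle.lt_or_eq with hlt | rfl
  · obtain ⟨r, rfl⟩ := hi
    exact hci (hfirst _ ⟨by omega, by omega⟩ hlt)
  · exact Nat.not_even_iff_odd.2 hi heven

lemma hatXn_subset_Xs {L : ℕ → Finset ℕ} {n : ℕ} (hn : Odd n) : hatXn L n ⊆ Xs L n := by
  intro c hc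
  simp only [hatXn, Finset.mem_filter, Finset.mem_Icc] at hc
  obtain ⟨-, i, ⟨hi1, hin⟩, hci, heven, hlast⟩ := hc
  rw [← Nat.add_sub_cancel' hin]
  exact mem_Xs_add_of_odd (fun h => hci (Xs_subset hi1 h)) (Nat.Odd.sub_even hin hn heven)
    fun j hj hj' => hlast j ⟨by omega, by omega⟩ hj

lemma lam_subset_Xs {L : ℕ → Finset ℕ} {n : ℕ} (hn : Odd n) : lam L n ⊆ Xs L n := by
  intro c hc
  simp only [lam, Finset.mem_filter, Finset.mem_Icc] at hc
  exact mem_Xs_of_odd hn fun j hj hj' => hc.2 j ⟨hj, hj'⟩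

lemma card_hatXn_add_card_lam_le {L : ℕ → Finset ℕ} {n : ℕ} (hn : Odd n) :
    (hatXn L n).card + (lam L n).card ≤ (Xs L n).card := by
  have hdisj : Disjoint (hatXn L n) (lam L n) := by
    refine Finset.disjoint_left.2 fun c hc => ?_
    simp only [hatXn, Finset.mem_filter, Finset.mem_sdiff] at hc
    exact hc.1.2
  rw [← Finset.card_union_of_disjoint hdisj]
  exact Finset.card_le_card (Finset.union_subset (hatXn_subset_Xs hn) (lam_subset_Xs hn))

theorem stmt_9 (n m : ℕ) (hn : Odd n) (L : ℕ → Finset ℕ)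
    (hcard : ∀ i, 1 ≤ i → i ≤ n → (L i).card = 4 * m) :
    max (2 * (n - 1) * m + (hatX1 L n).card + (hatXn L n).card + (lam L n).card)
        (2 * (n + 1) * m) ≤ SL L n := by
  have hXn := card_hatXn_add_card_lam_le (L := L) hn
  obtain ⟨k, rfl⟩ := hn
  have hmissing : ∀ c ∈ hatX1 L (2 * k + 1), MissingUpTo L (2 * k) c := by
    intro c hc
    simp only [hatX1, Finset.mem_filter, Finset.mem_Icc] at hc
    obtain ⟨-, i, ⟨hi1, hin⟩, hci, ⟨r, hr⟩, -⟩ := hc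
    exact ⟨i, hi1, by omega, hci⟩
  have hX1 := mul_add_card_le_SL (p := k) (hatX1 L (2 * k + 1)) hatX1_exists_missing_before_odd
    fun i hi hi' => hcard i hi (by omega)
  rw [Finset.filter_true_of_mem hmissing] at hX1
  refine max_le ?_ ?_
  · rw [SL_succ, Nat.add_sub_cancel]
    linarith
  · linarith [mul_succ_le_SL hcard]
end

section
/- Let k ≥ 1 and x, ℓ be integers with ℓ even, ℓ' = ℓ/2, ℓ' ≤ x, and 2k ≤ ℓ. Then Σ_{i=x+k−ℓ'+1}^{2k} (x choose i)·((ℓ−x) choose (2k−i)) ≤ Σ_{i=k+1}^{2k} (ℓ' choose i)·(ℓ' choose (2k−i)) = ((ℓ choose 2k) − (ℓ' choose k)²)/2. -/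
/-!
The left sum counts the `2k`-subsets `S` of an `ℓ`-set with `#(S ∩ X) > x + k - ℓ'`, where
`#X = x`. Adding `d` points to `X` raises `#(S ∩ X)` by at most `d`, so the count is largest at
`x = ℓ'`. There, Vandermonde's convolution `(ℓ choose 2k) = ∑ᵢ (ℓ' choose i) (ℓ' choose 2k - i)` is
symmetric under `i ↦ 2k - i`, so the terms with `i > k` make up half of it minus the central term.
-/

/-- Binomial coefficient on integers: `0` when the lower index is negative or
exceeds the upper index. -/
def ichoose (p q : ℤ) : ℤ :=
  if q < 0 ∨ p < q then 0 else (p.toNat).choose q.toNat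

lemma ichoose_natCast (a b : ℕ) : ichoose a b = a.choose b := by
  unfold ichoose
  split_ifs with h
  · simp [Nat.choose_eq_zero_of_lt (by omega : a < b)]
  · simp

lemma ichoose_eq_zero_of_lt {p q : ℤ} (h : p < q) : ichoose p q = 0 :=
  if_pos (Or.inr h)

open Finset

section CountSubsets

variable {α : Type*} [DecidableEq α] {U A : Finset α} {m : ℕ}

lemma card_filter_powersetCard_card_inter_eq (hAU : A ⊆ U) {i : ℕ} (hi : i ≤ m) :
    #{S ∈ U.powersetCard m | #(S ∩ A) = i} = (#A).choose i * (#U - #A).choose (m - i) := by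
  rw [← card_sdiff_of_subset hAU, ← card_powersetCard, ← card_powersetCard, ← card_product]
  refine card_nbij' (fun S ↦ (S ∩ A, S \ A)) (fun P ↦ P.1 ∪ P.2) ?_ ?_ ?_ ?_
  · intro S hS
    simp only [coe_filter, mem_powersetCard, Set.mem_ofPred_eq] at hS
    simp only [coe_product, mem_coe, Set.mem_prod, mem_powersetCard]
    refine ⟨⟨inter_subset_right, hS.2⟩, sdiff_subset_sdiff hS.1.1 le_rfl, ?_⟩
    rw [← hS.1.2, ← hS.2, ← card_sdiff_add_card_inter S A]; omega
  · rintro ⟨P, Q⟩ hPQ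
    simp only [coe_product, mem_coe, Set.mem_prod, mem_powersetCard] at hPQ
    obtain ⟨⟨hPA, rfl⟩, hQ, hQc⟩ := hPQ
    have hdis : Disjoint P Q := disjoint_of_subset_left hPA (subset_sdiff.mp hQ).2.symm
    have hPQA : (P ∪ Q) ∩ A = P := by ext x; grind
    simp only [coe_filter, mem_powersetCard, Set.mem_ofPred_eq, hPQA]
    refine ⟨⟨union_subset (hPA.trans hAU) (hQ.trans sdiff_subset), ?_⟩, trivial⟩
    rw [card_union_of_disjoint hdis]; omega
  · intro S _
    exact (union_comm _ _).trans (sdiff_union_inter S A)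
  · rintro ⟨P, Q⟩ hPQ
    simp only [coe_product, mem_coe, Set.mem_prod, mem_powersetCard] at hPQ
    obtain ⟨⟨hPA, -⟩, hQ, -⟩ := hPQ
    ext x <;> grind

lemma card_filter_powersetCard_le_card_inter (hAU : A ⊆ U) (t : ℕ) :
    #{S ∈ U.powersetCard m | t ≤ #(S ∩ A)}
      = ∑ i ∈ Icc t m, (#A).choose i * (#U - #A).choose (m - i) := by
  have hmaps : ∀ S ∈ {S ∈ U.powersetCard m | t ≤ #(S ∩ A)}, #(S ∩ A) ∈ Icc t m := by
    intro S hS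
    rw [mem_filter, mem_powersetCard] at hS
    exact mem_Icc.mpr ⟨hS.2, hS.1.2 ▸ card_le_card inter_subset_left⟩
  rw [card_eq_sum_card_fiberwise hmaps]
  refine sum_congr rfl fun i hi ↦ ?_
  rw [filter_filter, ← card_filter_powersetCard_card_inter_eq hAU (mem_Icc.mp hi).2]
  congr 1
  exact filter_congr fun S _ ↦ ⟨And.right, fun h ↦ ⟨h ▸ (mem_Icc.mp hi).1, h⟩⟩

lemma card_inter_le_card_inter_add_card_sdiff (S A B : Finset α) :
    #(S ∩ B) ≤ #(S ∩ A) + #(B \ A) := by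
  calc #(S ∩ B) ≤ #(S ∩ A ∪ B \ A) := card_le_card fun x ↦ by grind
    _ ≤ #(S ∩ A) + #(B \ A) := card_union_le _ _

end CountSubsets

theorem sum_Icc_choose_mul_choose_add_le {n a d : ℕ} (h : a + d ≤ n) (m t : ℕ) :
    ∑ i ∈ Icc (t + d) m, (a + d).choose i * (n - (a + d)).choose (m - i)
      ≤ ∑ i ∈ Icc t m, a.choose i * (n - a).choose (m - i) := by
  have hcount := fun b (hb : b ≤ n) s ↦
    card_filter_powersetCard_le_card_inter (m := m) (range_subset_range.mpr hb) s
  simp only [card_range] at hcount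
  rw [← hcount _ h, ← hcount a (by omega)]
  refine card_le_card (monotone_filter_right _ fun S _ hS ↦ ?_)
  have := card_inter_le_card_inter_add_card_sdiff S (range a) (range (a + d))
  rw [card_sdiff_of_subset (range_subset_range.mpr (by omega)), card_range, card_range] at this
  omega

theorem two_mul_sum_Icc_choose_mul_choose_add_sq (n k : ℕ) :
    2 * ∑ i ∈ Icc (k + 1) (2 * k), n.choose i * n.choose (2 * k - i) + n.choose k ^ 2
      = (2 * n).choose (2 * k) := by
  set f := fun i ↦ n.choose i * n.choose (2 * k - i)
  have hreflect : ∑ i ∈ range k, f i = ∑ i ∈ Icc (k + 1) (2 * k), f i := by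
    refine sum_nbij' (2 * k - ·) (2 * k - ·) ?_ ?_ ?_ ?_ fun i hi ↦ ?_
    · intro i hi; simp only [mem_range, mem_Icc] at hi ⊢; omega
    · intro i hi; simp only [mem_range, mem_Icc] at hi ⊢; omega
    · intro i hi; simp only [mem_range] at hi; omega
    · intro i hi; simp only [mem_Icc] at hi; omega
    · rw [mem_range] at hi
      simp only [f]
      rw [Nat.sub_sub_self (by omega : i ≤ 2 * k)]
      exact mul_comm _ _
  have hsplit : ∑ i ∈ range (2 * k + 1), f i
      = ∑ i ∈ range k, f i + f k + ∑ i ∈ Icc (k + 1) (2 * k), f i := by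
    rw [← sum_range_succ, ← sum_range_add_sum_Ico _ (by omega : k + 1 ≤ 2 * k + 1)]
    rfl
  rw [two_mul n, Nat.add_choose_eq, Nat.sum_antidiagonal_eq_sum_range_succ_mk, hsplit, hreflect]
  simp only [f, show 2 * k - k = k by omega]
  ring

theorem sum_Icc_ichoose_mul_ichoose_le (n m t : ℕ) {a b : ℕ} (hab : a ≤ b) :
    ∑ i ∈ Icc (t + (b - a)) m, ichoose b i * ichoose ((n : ℤ) - b) ((m : ℤ) - i)
      ≤ ∑ i ∈ Icc t m, (a.choose i * (n - a).choose (m - i) : ℤ) := by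
  by_cases hbn : b ≤ n
  · obtain ⟨d, rfl⟩ : ∃ d, b = a + d := ⟨b - a, by omega⟩
    have hnat : ∀ i ∈ Icc (t + (a + d - a)) m,
        ichoose ↑(a + d) i * ichoose ((n : ℤ) - ↑(a + d)) ((m : ℤ) - i)
          = ((a + d).choose i * (n - (a + d)).choose (m - i) : ℕ) := by
      intro i hi
      rw [mem_Icc] at hi
      rw [show (n : ℤ) - ↑(a + d) = ↑(n - (a + d)) by omega,
        show (m : ℤ) - i = ↑(m - i) by omega, ichoose_natCast, ichoose_natCast]
      push_cast
      rfl
    rw [sum_congr rfl hnat, Nat.add_sub_cancel_left]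
    exact_mod_cast sum_Icc_choose_mul_choose_add_le hbn m t
  -- for `b > n` the upper index `n - b` is negative, so every `ichoose` factor vanishes
  · refine (sum_eq_zero fun i hi ↦ ?_).trans_le (sum_nonneg fun i _ ↦ by positivity)
    rw [mem_Icc] at hi
    rw [ichoose_eq_zero_of_lt (by omega : (n : ℤ) - b < m - i), mul_zero]

theorem stmt_15_general (k x ℓ : ℕ) (hℓ : Even ℓ) (hx : ℓ / 2 ≤ x) :
    (∑ i ∈ Finset.Icc (x + k - ℓ / 2 + 1) (2 * k),
        ichoose x i * ichoose ((ℓ : ℤ) - x) ((2 * k : ℤ) - i))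
      ≤ ∑ i ∈ Finset.Icc (k + 1) (2 * k),
          ((ℓ / 2).choose i * (ℓ / 2).choose (2 * k - i) : ℤ) ∧
    ((∑ i ∈ Finset.Icc (k + 1) (2 * k),
        (ℓ / 2).choose i * (ℓ / 2).choose (2 * k - i) : ℕ) : ℚ)
      = ((ℓ.choose (2 * k) : ℚ) - ((ℓ / 2).choose k : ℚ) ^ 2) / 2 := by
  have hhalf : 2 * (ℓ / 2) = ℓ := Nat.two_mul_div_two_of_even hℓ
  refine ⟨?_, ?_⟩
  · have htail := sum_Icc_ichoose_mul_ichoose_le ℓ (2 * k) (k + 1) hx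
    rw [show ℓ - ℓ / 2 = ℓ / 2 by omega, show k + 1 + (x - ℓ / 2) = x + k - ℓ / 2 + 1 by omega]
      at htail
    exact_mod_cast htail
  · have hvandermonde := two_mul_sum_Icc_choose_mul_choose_add_sq (ℓ / 2) k
    rw [hhalf] at hvandermonde
    rw [← hvandermonde]
    push_cast
    ring

theorem stmt_15 (k x ℓ : ℕ) (hk : 1 ≤ k) (hℓ : Even ℓ) (hx : ℓ / 2 ≤ x)
    (hkℓ : 2 * k ≤ ℓ) :
    (∑ i ∈ Finset.Icc (x + k - ℓ / 2 + 1) (2 * k),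
        ichoose x i * ichoose ((ℓ : ℤ) - x) ((2 * k : ℤ) - i))
      ≤ ∑ i ∈ Finset.Icc (k + 1) (2 * k),
          ((ℓ / 2).choose i * (ℓ / 2).choose (2 * k - i) : ℤ) ∧
    ((∑ i ∈ Finset.Icc (k + 1) (2 * k),
        (ℓ / 2).choose i * (ℓ / 2).choose (2 * k - i) : ℕ) : ℚ)
      = ((ℓ.choose (2 * k) : ℚ) - ((ℓ / 2).choose k : ℚ) ^ 2) / 2 :=
  stmt_15_general k x ℓ hℓ hx
end
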